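/- arXiv:1605.09420 — 4 statements merged into one kernel-verified Lean document; each statement's English description precedes it below -/
import Mathlib

section
/- Let 0 ≤ α < 1, K ≥ 0, and let d₀ > 0 and 0 < s ≤ d₀. Then (2/s²)·∫₀ˢ t·K/(d₀ - t)^α dt ≤ C(α)·K/s^α, where C(α) is a constant depending only on α (one may take C(α) = 2/(1-α)). -/
/-!
On `[0, s)` we have `t ≤ s` and `d₀ - t ≥ s - t > 0`, so the integrand is at most
`s K (s - t)^{-α}`, whose integral over `[0, s]` is `s K s^{1-α} / (1 - α)`; this is finite
because `α < 1`. Multiplying by `2 / s²` gives `2 K / ((1 - α) s^α)`.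
-/

open MeasureTheory Set

namespace Real

theorem intervalIntegrable_sub_rpow_neg {α : ℝ} (hα : α < 1) (s : ℝ) :
    IntervalIntegrable (fun t => (s - t) ^ (-α)) volume 0 s := by
  have h := (intervalIntegral.intervalIntegrable_rpow' (a := 0) (b := s) (r := -α)
    (by linarith)).comp_sub_left s
  rw [sub_zero, sub_self] at h
  exact h.symm

theorem integral_sub_rpow_neg {α : ℝ} (hα : α < 1) (s : ℝ) :
    ∫ t in (0 : ℝ)..s, (s - t) ^ (-α) = s ^ (1 - α) / (1 - α) := by
  rw [intervalIntegral.integral_comp_sub_left (fun u => u ^ (-α)), sub_self, sub_zero,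
    integral_rpow (Or.inl (by linarith)), zero_rpow (by linarith), sub_zero, neg_add_eq_sub]

theorem div_sub_rpow_le_mul_sub_rpow_neg {α t s d₀ : ℝ} (hα : 0 ≤ α) (ht : 0 ≤ t)
    (hts : t < s) (hsd : s ≤ d₀) : t / (d₀ - t) ^ α ≤ s * (s - t) ^ (-α) := by
  have hst : 0 < s - t := sub_pos.mpr hts
  rw [rpow_neg hst.le, ← div_eq_mul_inv]
  exact div_le_div₀ (ht.trans hts.le) hts.le (rpow_pos_of_pos hst α)
    (rpow_le_rpow hst.le (by linarith) hα)

theorem integral_div_sub_rpow_le {α s d₀ : ℝ} (hα0 : 0 ≤ α) (hα1 : α < 1) (hs : 0 ≤ s)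
    (hsd : s ≤ d₀) :
    ∫ t in (0 : ℝ)..s, t / (d₀ - t) ^ α ≤ s * (s ^ (1 - α) / (1 - α)) := by
  -- On `Ioo` the endpoint `t = s`, where `0 ^ (-α)` is junk, is gone; nonnegativity of the
  -- integrand spares us proving its integrability.
  rw [← integral_sub_rpow_neg hα1, ← intervalIntegral.integral_const_mul,
    intervalIntegral.integral_of_le hs, intervalIntegral.integral_of_le hs,
    integral_Ioc_eq_integral_Ioo, integral_Ioc_eq_integral_Ioo]
  refine integral_mono_of_nonneg ?_ ?_ ?_
  · refine ae_restrict_of_forall_mem measurableSet_Ioo fun t ht => ?_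
    exact div_nonneg ht.1.le (rpow_nonneg (by linarith [ht.2]) α)
  · exact (((intervalIntegrable_sub_rpow_neg hα1 s).const_mul s).def'.mono_set
      (by simp [uIoc_of_le hs, Ioo_subset_Ioc_self]))
  · exact ae_restrict_of_forall_mem measurableSet_Ioo fun t ht =>
      div_sub_rpow_le_mul_sub_rpow_neg hα0 ht.1.le ht.2 hsd

end Real

theorem stmt_3_general (α K d₀ s : ℝ) (hα0 : 0 ≤ α) (hα1 : α < 1) (hK : 0 ≤ K)
    (hs : 0 < s) (hsd : s ≤ d₀) :
    (2 / s ^ 2) * ∫ t in (0 : ℝ)..s, t * K / (d₀ - t) ^ α ≤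
      (2 / (1 - α)) * K / s ^ α := by
  have hK_out : ∫ t in (0 : ℝ)..s, t * K / (d₀ - t) ^ α =
      K * ∫ t in (0 : ℝ)..s, t / (d₀ - t) ^ α := by
    simp_rw [mul_comm _ K, mul_div_assoc, intervalIntegral.integral_const_mul]
  calc 2 / s ^ 2 * ∫ t in (0 : ℝ)..s, t * K / (d₀ - t) ^ α
      ≤ 2 / s ^ 2 * (K * (s * (s ^ (1 - α) / (1 - α)))) := by
        rw [hK_out]
        gcongr
        exact Real.integral_div_sub_rpow_le hα0 hα1 hs.le hsd
    _ = 2 / (1 - α) * K / s ^ α := by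
        have h1α : 0 < 1 - α := by linarith
        have hsα : s ^ (1 - α) * s ^ α = s := by
          rw [← Real.rpow_add hs, sub_add_cancel, Real.rpow_one]
        have := Real.rpow_pos_of_pos hs α
        field_simp
        linear_combination K * hsα

/-- Let `0 ≤ α < 1`, `K ≥ 0`, `d₀ > 0`, `0 < s ≤ d₀`. Then
`(2/s²)·∫₀ˢ t·K/(d₀-t)^α dt ≤ (2/(1-α))·K/s^α`. -/
theorem stmt_3 (α K d₀ s : ℝ) (hα0 : 0 ≤ α) (hα1 : α < 1) (hK : 0 ≤ K)
    (hd₀ : 0 < d₀) (hs : 0 < s) (hsd : s ≤ d₀) :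
    (2 / s ^ 2) * ∫ t in (0 : ℝ)..s, t * K / (d₀ - t) ^ α ≤
      (2 / (1 - α)) * K / s ^ α :=
  stmt_3_general α K d₀ s hα0 hα1 hK hs hsd
end

section
/- Let 0 ≤ α < 1, K ≥ 0, d₀ > 0 and s > d₀. Then (2/s²)[∫₀^{d₀} t·K/(d₀ - t)^α dt + ∫_{d₀}^{s} t·K/(t - d₀)^α dt] ≤ C(α)·K/s^α for a constant C(α) depending only on α. -/
open intervalIntegral Real

private lemma rpow_int_eq (α c : ℝ) (hα0 : 0 ≤ α) (hα1 : α < 1) (hc : 0 < c) :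
    (∫ u in (0:ℝ)..c, u ^ (-α)) = c ^ (1 - α) / (1 - α) := by
  rw [integral_rpow (Or.inl (by linarith))]
  rw [Real.zero_rpow (by linarith : -α + 1 ≠ 0)]
  norm_num
  ring_nf

private lemma key_int (α K d₀ s : ℝ) (hα0 : 0 ≤ α) (hα1 : α < 1)
    (hK : 0 ≤ K) (hd : 0 < d₀) (hs : d₀ < s) :
    (∫ t in (0:ℝ)..d₀, t * K / (d₀ - t) ^ α) ≤ s * K * (d₀ ^ (1 - α) / (1 - α)) := by
  have hint : IntervalIntegrable (fun t => (d₀ - t) ^ (-α)) MeasureTheory.volume 0 d₀ := by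
    have := (intervalIntegrable_rpow' (a := d₀ - 0) (b := d₀ - d₀)
      (by linarith : (-1:ℝ) < -α)).comp_sub_left d₀
    simpa using this
  have heq : ∀ t ∈ Set.uIcc (0:ℝ) d₀, t * K / (d₀ - t) ^ α = t * K * (d₀ - t) ^ (-α) := by
    intro t ht
    rw [Set.uIcc_of_le hd.le] at ht
    rw [Real.rpow_neg (by linarith [ht.2] : (0:ℝ) ≤ d₀ - t), div_eq_mul_inv]
  rw [intervalIntegral.integral_congr heq]
  have hmono : (∫ t in (0:ℝ)..d₀, t * K * (d₀ - t) ^ (-α))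
      ≤ ∫ t in (0:ℝ)..d₀, s * K * (d₀ - t) ^ (-α) := by
    apply intervalIntegral.integral_mono_on hd.le
    · exact hint.continuousOn_mul (by fun_prop)
    · exact hint.continuousOn_mul (by fun_prop)
    · intro t ht
      have h1 : (0:ℝ) ≤ (d₀ - t) ^ (-α) := Real.rpow_nonneg (by linarith [ht.2]) _
      have : t * K ≤ s * K := by nlinarith [ht.1, ht.2]
      nlinarith
  refine hmono.trans_eq ?_
  rw [intervalIntegral.integral_const_mul]
  rw [show (fun t => (d₀ - t) ^ (-α)) = fun t => (fun u => u ^ (-α)) (d₀ - t) from rfl]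
  rw [intervalIntegral.integral_comp_sub_left (fun u : ℝ => u ^ (-α)) d₀]
  simp only [sub_self, sub_zero]
  rw [rpow_int_eq α d₀ hα0 hα1 hd]

private lemma key_int2 (α K d₀ s : ℝ) (hα0 : 0 ≤ α) (hα1 : α < 1)
    (hK : 0 ≤ K) (hd : 0 < d₀) (hs : d₀ < s) :
    (∫ t in d₀..s, t * K / (t - d₀) ^ α) ≤ s * K * (s ^ (1 - α) / (1 - α)) := by
  have hsd : 0 < s - d₀ := by linarith
  have hint : IntervalIntegrable (fun t => (t - d₀) ^ (-α)) MeasureTheory.volume d₀ s := by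
    have := (intervalIntegrable_rpow' (a := d₀ - d₀) (b := s - d₀)
      (by linarith : (-1:ℝ) < -α)).comp_sub_right d₀
    simpa using this
  have heq : ∀ t ∈ Set.uIcc d₀ s, t * K / (t - d₀) ^ α = t * K * (t - d₀) ^ (-α) := by
    intro t ht
    rw [Set.uIcc_of_le hs.le] at ht
    rw [Real.rpow_neg (by linarith [ht.1] : (0:ℝ) ≤ t - d₀), div_eq_mul_inv]
  rw [intervalIntegral.integral_congr heq]
  have hmono : (∫ t in d₀..s, t * K * (t - d₀) ^ (-α))
      ≤ ∫ t in d₀..s, s * K * (t - d₀) ^ (-α) := by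
    apply intervalIntegral.integral_mono_on hs.le
    · exact hint.continuousOn_mul (by fun_prop)
    · exact hint.continuousOn_mul (by fun_prop)
    · intro t ht
      have h1 : (0:ℝ) ≤ (t - d₀) ^ (-α) := Real.rpow_nonneg (by linarith [ht.1]) _
      have : t * K ≤ s * K := by nlinarith [ht.2]
      nlinarith
  refine hmono.trans ?_
  rw [intervalIntegral.integral_const_mul]
  rw [show (fun t => (t - d₀) ^ (-α)) = fun t => (fun u => u ^ (-α)) (t - d₀) from rfl]
  rw [intervalIntegral.integral_comp_sub_right (fun u : ℝ => u ^ (-α)) d₀]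
  simp only [sub_self]
  rw [rpow_int_eq α (s - d₀) hα0 hα1 hsd]
  have h1α : (0:ℝ) < 1 - α := by linarith
  have hle : (s - d₀) ^ (1 - α) ≤ s ^ (1 - α) :=
    Real.rpow_le_rpow (by linarith) (by linarith) h1α.le
  have hsK : 0 ≤ s * K := mul_nonneg (by linarith) hK
  exact mul_le_mul_of_nonneg_left ((div_le_div_iff_of_pos_right h1α).mpr hle) hsK

/-- Let `0 ≤ α < 1`. There is a constant `C(α)` depending only on `α` such that
for all `K ≥ 0`, `d₀ > 0` and `s > d₀`,
`(2/s²)[∫₀^{d₀} t·K/(d₀-t)^α dt + ∫_{d₀}^{s} t·K/(t-d₀)^α dt] ≤ C(α)·K/s^α`. -/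
theorem stmt_4 (α : ℝ) (hα0 : 0 ≤ α) (hα1 : α < 1) :
    ∃ C : ℝ, 0 < C ∧ ∀ K d₀ s : ℝ, 0 ≤ K → 0 < d₀ → d₀ < s →
      (2 / s ^ 2) * ((∫ t in (0 : ℝ)..d₀, t * K / (d₀ - t) ^ α) +
        ∫ t in d₀..s, t * K / (t - d₀) ^ α) ≤ C * K / s ^ α := by
  have h1α : (0:ℝ) < 1 - α := by linarith
  refine ⟨4 / (1 - α), by positivity, ?_⟩
  intro K d₀ s hK hd hs
  have hspos : 0 < s := lt_trans hd hs
  have h1 := key_int α K d₀ s hα0 hα1 hK hd hs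
  have h2 := key_int2 α K d₀ s hα0 hα1 hK hd hs
  have hd1 : d₀ ^ (1 - α) ≤ s ^ (1 - α) :=
    Real.rpow_le_rpow hd.le hs.le h1α.le
  have hsum : (∫ t in (0:ℝ)..d₀, t * K / (d₀ - t) ^ α) +
      (∫ t in d₀..s, t * K / (t - d₀) ^ α) ≤ 2 * (s * K * (s ^ (1 - α) / (1 - α))) := by
    have : s * K * (d₀ ^ (1 - α) / (1 - α)) ≤ s * K * (s ^ (1 - α) / (1 - α)) := by
      have : 0 ≤ s * K := by positivity
      gcongr
    linarith
  have hcoef : (0:ℝ) < 2 / s ^ 2 := by positivity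
  calc (2 / s ^ 2) * ((∫ t in (0:ℝ)..d₀, t * K / (d₀ - t) ^ α) +
        ∫ t in d₀..s, t * K / (t - d₀) ^ α)
      ≤ (2 / s ^ 2) * (2 * (s * K * (s ^ (1 - α) / (1 - α)))) := by
        exact mul_le_mul_of_nonneg_left hsum hcoef.le
    _ = 4 / (1 - α) * K / s ^ α := by
        have hsα : (0:ℝ) < s ^ α := Real.rpow_pos_of_pos hspos α
        have hs1α : s ^ (1 - α) = s / s ^ α := by
          rw [Real.rpow_sub hspos, Real.rpow_one]
        rw [hs1α]
        field_simp
        ring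
end

section
/- Let (M,g) be a complete Riemannian manifold, L smooth with |∇L(y)| ≤ K/d(y,O)^α for all y, where O ∈ M, K ≥ 0, 0 ≤ α < 1. Then for all y, z ∈ M, |L(y) - L(z)| ≤ (2K/(1-α))·d(y,z)^{1-α}. -/
/-!
Along a unit-speed minimal geodesic `γ` from `y` to `z`, the triangle inequality gives
`d(γ t, O) ≥ |t - d(y, O)|`, so `|(L ∘ γ)'(t)| ≤ K |t - d(y, O)|^(-α)`. Integrating,
`|L y - L z|` is at most `K` times the integral of `|u|^(-α)` over an interval of length
`d(y, z)`, and any such integral is at most `2 d(y, z)^(1-α) / (1 - α)`.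
-/

open MeasureTheory Set intervalIntegral

lemma rpow_sub_rpow_le_sub_rpow {p x y : ℝ} (hx : 0 ≤ x) (hxy : x ≤ y) (hp0 : 0 ≤ p)
    (hp1 : p ≤ 1) : y ^ p - x ^ p ≤ (y - x) ^ p := by
  have h := Real.rpow_add_le_add_rpow hx (sub_nonneg.2 hxy) hp0 hp1
  rw [add_sub_cancel] at h
  linarith

lemma abs_sub_le_integral_of_abs_deriv_le {f g : ℝ → ℝ} {a b : ℝ} (hab : a ≤ b)
    (hf : ∀ t ∈ Icc a b, DifferentiableAt ℝ f t) (hg : IntervalIntegrable g volume a b)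
    (hbound : ∀ᵐ t, t ∈ Ioc a b → |deriv f t| ≤ g t) :
    |f b - f a| ≤ ∫ t in a..b, g t := by
  have hint : IntervalIntegrable (deriv f) volume a b := by
    refine hg.mono_fun' (measurable_deriv f).aestronglyMeasurable ?_
    rw [uIoc_of_le hab, Filter.EventuallyLE, ae_restrict_iff' measurableSet_Ioc]
    exact hbound
  have hderiv : ∀ t ∈ uIcc a b, HasDerivAt f (deriv f t) t := fun t ht =>
    (hf t (uIcc_of_le hab ▸ ht)).hasDerivAt
  rw [← integral_eq_sub_of_hasDerivAt hderiv hint]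
  exact norm_integral_le_of_norm_le (f := deriv f) hab hbound hg

section AbsRpowNeg

variable {α : ℝ}

lemma intervalIntegrable_abs_rpow_neg (hα : α < 1) (a b : ℝ) :
    IntervalIntegrable (fun u : ℝ => |u| ^ (-α)) volume a b := by
  have hnonneg : ∀ c, 0 ≤ c → IntervalIntegrable (fun u : ℝ => |u| ^ (-α)) volume 0 c :=
    fun c hc => (intervalIntegrable_rpow' (r := -α) (by linarith)).congr_uIoo fun u hu => by
      rw [uIoo_of_le hc] at hu
      simp only [abs_of_pos hu.1]
  have hzero : ∀ c, IntervalIntegrable (fun u : ℝ => |u| ^ (-α)) volume 0 c := fun c => by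
    rcases le_total 0 c with hc | hc
    · exact hnonneg c hc
    · simpa using ((IntervalIntegrable.iff_comp_neg).mp (hnonneg (-c) (by linarith)))
  exact (hzero a).symm.trans (hzero b)

lemma integral_abs_rpow_neg_of_nonneg (hα : α < 1) {x : ℝ} (hx : 0 ≤ x) :
    ∫ u in (0 : ℝ)..x, |u| ^ (-α) = x ^ (1 - α) / (1 - α) := by
  rw [integral_congr fun u hu => by rw [abs_of_nonneg (uIcc_of_le hx ▸ hu).1],
    integral_rpow (Or.inl (by linarith)), Real.zero_rpow (by linarith), sub_zero,
    neg_add_eq_sub]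

lemma integral_abs_rpow_neg_of_nonpos (hα : α < 1) {x : ℝ} (hx : x ≤ 0) :
    ∫ u in (0 : ℝ)..x, |u| ^ (-α) = -((-x) ^ (1 - α) / (1 - α)) := by
  have h := integral_comp_neg (a := 0) (b := -x) fun u : ℝ => |u| ^ (-α)
  simp only [abs_neg, neg_neg, neg_zero] at h
  rw [integral_symm, ← h, integral_abs_rpow_neg_of_nonneg hα (by linarith)]

lemma integral_abs_rpow_neg_le (hα0 : 0 ≤ α) (hα1 : α < 1) {a b : ℝ} (hab : a ≤ b) :
    ∫ u in a..b, |u| ^ (-α) ≤ 2 * ((b - a) ^ (1 - α) / (1 - α)) := by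
  have hp : 0 < 1 - α := by linarith
  -- Split at the singularity via `∫ a..b = ∫ 0..b - ∫ 0..a`; when `a` and `b` have the same sign,
  -- the bound is the subadditivity of `x ↦ x ^ (1 - α)`.
  rw [← integral_interval_sub_left (intervalIntegrable_abs_rpow_neg hα1 0 b)
    (intervalIntegrable_abs_rpow_neg hα1 0 a), ← mul_div_assoc]
  rcases le_total 0 a with ha | ha
  · rw [integral_abs_rpow_neg_of_nonneg hα1 (ha.trans hab), integral_abs_rpow_neg_of_nonneg hα1 ha,
      ← sub_div]
    gcongr
    linarith [rpow_sub_rpow_le_sub_rpow ha hab hp.le (by linarith),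
      Real.rpow_nonneg (sub_nonneg.2 hab) (1 - α)]
  rcases le_total b 0 with hb | hb
  · rw [integral_abs_rpow_neg_of_nonpos hα1 hb, integral_abs_rpow_neg_of_nonpos hα1 ha,
      neg_sub_neg, ← sub_div]
    gcongr
    have h := rpow_sub_rpow_le_sub_rpow (x := -b) (y := -a) (by linarith) (by linarith) hp.le
      (by linarith)
    rw [neg_sub_neg] at h
    linarith [Real.rpow_nonneg (sub_nonneg.2 hab) (1 - α)]
  · rw [integral_abs_rpow_neg_of_nonneg hα1 hb, integral_abs_rpow_neg_of_nonpos hα1 ha,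
      sub_neg_eq_add, ← add_div]
    gcongr
    have h1 : b ^ (1 - α) ≤ (b - a) ^ (1 - α) := by gcongr; linarith
    have h2 : (-a) ^ (1 - α) ≤ (b - a) ^ (1 - α) := by gcongr <;> linarith
    linarith

end AbsRpowNeg

/-- Hölder estimate (2.54): on a complete Riemannian manifold (modelled here as
a metric space in which any two points are joined by a unit-speed minimal
geodesic), if `|∇L| ≤ K/d(·,O)^α` along geodesics (i.e. the derivative of `L`
along any unit-speed minimal geodesic `γ` satisfies
`|(L∘γ)'(t)| ≤ K/d(γ(t),O)^α`), with `K ≥ 0`, `0 ≤ α < 1`, then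
`|L(y) - L(z)| ≤ (2K/(1-α))·d(y,z)^{1-α}` for all `y, z`. -/
theorem stmt_12 {M : Type*} [MetricSpace M] (O : M) (L : M → ℝ) (K α : ℝ)
    (hK : 0 ≤ K) (hα0 : 0 ≤ α) (hα1 : α < 1)
    (hgeo : ∀ y z : M, ∃ γ : ℝ → M, γ 0 = y ∧ γ (dist y z) = z ∧
      (∀ a ∈ Set.Icc (0 : ℝ) (dist y z), ∀ b ∈ Set.Icc (0 : ℝ) (dist y z),
        dist (γ a) (γ b) = |a - b|) ∧
      (∀ t ∈ Set.Icc (0 : ℝ) (dist y z), DifferentiableAt ℝ (L ∘ γ) t ∧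
        |deriv (L ∘ γ) t| ≤ K / dist (γ t) O ^ α)) :
    ∀ y z : M, |L y - L z| ≤ (2 * K / (1 - α)) * dist y z ^ (1 - α) := by
  intro y z
  obtain ⟨γ, hγ0, hγd, hγiso, hγL⟩ := hgeo y z
  set d := dist y z
  have hd : 0 ≤ d := dist_nonneg
  have hfar : ∀ t ∈ Icc 0 d, |t - dist y O| ≤ dist (γ t) O := fun t ht => by
    have hγt : dist (γ t) y = t := by
      rw [← hγ0, hγiso t ht 0 ⟨le_rfl, hd⟩, sub_zero, abs_of_nonneg ht.1]
    simpa only [hγt, dist_comm O y] using abs_dist_sub_le (γ t) O y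
  -- Only almost everywhere: at `t = dist y O` the right side is the junk value `K * 0 ^ (-α)`.
  have hbound : ∀ᵐ t, t ∈ Ioc 0 d → |deriv (L ∘ γ) t| ≤ K * |t - dist y O| ^ (-α) := by
    filter_upwards [Measure.ae_ne volume (dist y O)] with t hne ht
    have hpos : 0 < |t - dist y O| := abs_pos.2 (sub_ne_zero.2 hne)
    calc |deriv (L ∘ γ) t| ≤ K / dist (γ t) O ^ α := (hγL t (Ioc_subset_Icc_self ht)).2
      _ ≤ K / |t - dist y O| ^ α := by gcongr; exact hfar t (Ioc_subset_Icc_self ht)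
      _ = K * |t - dist y O| ^ (-α) := by rw [Real.rpow_neg hpos.le, div_eq_mul_inv]
  have hint : IntervalIntegrable (fun t => K * |t - dist y O| ^ (-α)) volume 0 d := by
    simpa using ((intervalIntegrable_abs_rpow_neg hα1 (-dist y O) (d - dist y O)).comp_sub_right
      (dist y O)).const_mul K
  calc |L y - L z| = |(L ∘ γ) d - (L ∘ γ) 0| := by simp [hγ0, hγd, abs_sub_comm]
    _ ≤ ∫ t in (0 : ℝ)..d, K * |t - dist y O| ^ (-α) :=
      abs_sub_le_integral_of_abs_deriv_le hd (fun t ht => (hγL t ht).1) hint hbound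
    _ = K * ∫ u in -dist y O..d - dist y O, |u| ^ (-α) := by
      rw [intervalIntegral.integral_const_mul, integral_comp_sub_right (fun u => |u| ^ (-α)),
        zero_sub]
    _ ≤ K * (2 * ((d - dist y O - -dist y O) ^ (1 - α) / (1 - α))) := by
      gcongr
      exact integral_abs_rpow_neg_le hα0 hα1 (by linarith)
    _ = 2 * K / (1 - α) * d ^ (1 - α) := by rw [sub_neg_eq_add, sub_add_cancel]; ring
end

section
/- Let μ = n/(n-2) for an integer n ≥ 3, and let (vᵢ) be a sequence of positive reals satisfying vᵢ₊₁ ≤ (C·4^{βi})^{μ^{-i}}·vᵢ for all i ≥ 0, where C ≥ 1 and β > 0. Then the limit superior of vᵢ is at most C^{Σμ^{-i}}·4^{β·Σ i μ^{-i}}·v₀, and both series Σᵢ μ^{-i} and Σᵢ i·μ^{-i} converge. -/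
open Filter

/-- Abstract Moser-iteration limit step (Appendix I, (GE eq10)): let
`μ = n/(n-2)`, `n ≥ 3`, and `vᵢ > 0` with
`vᵢ₊₁ ≤ (C·4^{βi})^{μ^{-i}}·vᵢ`, `C ≥ 1`, `β > 0`.  Then both series
`Σ μ^{-i}` and `Σ i·μ^{-i}` converge and
`limsup vᵢ ≤ C^{Σμ^{-i}}·4^{β·Σ i μ^{-i}}·v₀`. -/
theorem stmt_18 (n : ℕ) (hn : 3 ≤ n) (C β : ℝ) (hC : 1 ≤ C) (hβ : 0 < β)
    (v : ℕ → ℝ) (hv : ∀ i, 0 < v i)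
    (hiter : ∀ i : ℕ, v (i + 1) ≤
      (C * 4 ^ (β * i)) ^ (((n : ℝ) / (n - 2)) ^ (-(i : ℝ))) * v i) :
    Summable (fun i : ℕ => ((n : ℝ) / (n - 2)) ^ (-(i : ℝ))) ∧
    Summable (fun i : ℕ => (i : ℝ) * ((n : ℝ) / (n - 2)) ^ (-(i : ℝ))) ∧
    limsup v atTop ≤
      C ^ (∑' i : ℕ, ((n : ℝ) / (n - 2)) ^ (-(i : ℝ))) *
        4 ^ (β * ∑' i : ℕ, (i : ℝ) * ((n : ℝ) / (n - 2)) ^ (-(i : ℝ))) * v 0 := by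
  set μ : ℝ := (n : ℝ) / (n - 2) with hμdef
  have hn2 : (0 : ℝ) < (n : ℝ) - 2 := by
    have : (3 : ℝ) ≤ (n : ℝ) := by exact_mod_cast hn
    linarith
  have hμ : 1 < μ := by
    rw [hμdef, lt_div_iff₀ hn2]; linarith
  have hμ0 : 0 < μ := lt_trans one_pos hμ
  set r : ℝ := μ⁻¹ with hrdef
  have hr0 : 0 < r := inv_pos.mpr hμ0
  have hr1 : r < 1 := inv_lt_one_of_one_lt₀ hμ
  have hrw : ∀ i : ℕ, μ ^ (-(i : ℝ)) = r ^ i := by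
    intro i
    rw [Real.rpow_neg hμ0.le, Real.rpow_natCast, hrdef, inv_pow]
  have hS1 : Summable (fun i : ℕ => μ ^ (-(i : ℝ))) := by
    refine (summable_geometric_of_lt_one hr0.le hr1).congr fun i => (hrw i).symm
  have hS2 : Summable (fun i : ℕ => (i : ℝ) * μ ^ (-(i : ℝ))) := by
    have := summable_pow_mul_geometric_of_norm_lt_one 1 (r := r)
      (by rwa [Real.norm_eq_abs, abs_of_pos hr0])
    refine this.congr fun i => ?_
    simp [hrw i]
  refine ⟨hS1, hS2, ?_⟩
  set S1 : ℝ := ∑' i : ℕ, μ ^ (-(i : ℝ)) with hS1def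
  set S2 : ℝ := ∑' i : ℕ, (i : ℝ) * μ ^ (-(i : ℝ)) with hS2def
  have hterm_nonneg : ∀ i : ℕ, 0 ≤ μ ^ (-(i : ℝ)) := fun i => Real.rpow_nonneg hμ0.le _
  have hterm2_nonneg : ∀ i : ℕ, 0 ≤ (i : ℝ) * μ ^ (-(i : ℝ)) := fun i =>
    mul_nonneg (Nat.cast_nonneg i) (hterm_nonneg i)
  have hC0 : (0 : ℝ) < C := lt_of_lt_of_le one_pos hC
  -- key: v k ≤ C ^ (partial S1) * 4 ^ (β * partial S2) * v 0
  have key : ∀ k : ℕ, v k ≤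
      C ^ (∑ i ∈ Finset.range k, μ ^ (-(i : ℝ))) *
        4 ^ (β * ∑ i ∈ Finset.range k, (i : ℝ) * μ ^ (-(i : ℝ))) * v 0 := by
    intro k
    induction k with
    | zero => simp
    | succ k ih =>
      have h4 : (0 : ℝ) < 4 := by norm_num
      have step : (C * 4 ^ (β * k)) ^ (μ ^ (-(k : ℝ))) =
          C ^ (μ ^ (-(k : ℝ))) * 4 ^ (β * k * μ ^ (-(k : ℝ))) := by
        rw [Real.mul_rpow hC0.le (Real.rpow_nonneg h4.le _), ← Real.rpow_mul h4.le]
      calc v (k + 1) ≤ (C * 4 ^ (β * k)) ^ (μ ^ (-(k : ℝ))) * v k := hiter k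
        _ ≤ (C * 4 ^ (β * k)) ^ (μ ^ (-(k : ℝ))) *
            (C ^ (∑ i ∈ Finset.range k, μ ^ (-(i : ℝ))) *
              4 ^ (β * ∑ i ∈ Finset.range k, (i : ℝ) * μ ^ (-(i : ℝ))) * v 0) := by
            apply mul_le_mul_of_nonneg_left ih
            exact Real.rpow_nonneg (mul_nonneg hC0.le (Real.rpow_nonneg h4.le _)) _
        _ = C ^ (∑ i ∈ Finset.range (k+1), μ ^ (-(i : ℝ))) *
              4 ^ (β * ∑ i ∈ Finset.range (k+1), (i : ℝ) * μ ^ (-(i : ℝ))) * v 0 := by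
            rw [step, Finset.sum_range_succ, Finset.sum_range_succ,
              Real.rpow_add hC0, mul_add, Real.rpow_add h4]
            ring
  have hB : ∀ k : ℕ, v k ≤ C ^ S1 * 4 ^ (β * S2) * v 0 := by
    intro k
    refine (key k).trans ?_
    have h1 : ∑ i ∈ Finset.range k, μ ^ (-(i : ℝ)) ≤ S1 :=
      Summable.sum_le_tsum _ (fun i _ => hterm_nonneg i) hS1
    have h2 : ∑ i ∈ Finset.range k, (i : ℝ) * μ ^ (-(i : ℝ)) ≤ S2 :=
      Summable.sum_le_tsum _ (fun i _ => hterm2_nonneg i) hS2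
    have hCm : C ^ (∑ i ∈ Finset.range k, μ ^ (-(i : ℝ))) ≤ C ^ S1 :=
      Real.rpow_le_rpow_of_exponent_le hC h1
    have h4m : (4:ℝ) ^ (β * ∑ i ∈ Finset.range k, (i : ℝ) * μ ^ (-(i : ℝ))) ≤ 4 ^ (β * S2) :=
      Real.rpow_le_rpow_of_exponent_le (by norm_num)
        (mul_le_mul_of_nonneg_left h2 hβ.le)
    have h4pos : (0:ℝ) < (4:ℝ) ^ (β * ∑ i ∈ Finset.range k, (i : ℝ) * μ ^ (-(i : ℝ))) :=
      Real.rpow_pos_of_pos (by norm_num) _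
    apply mul_le_mul_of_nonneg_right _ (hv 0).le
    exact mul_le_mul hCm h4m h4pos.le (Real.rpow_nonneg hC0.le _)
  exact limsup_le_of_le (isCoboundedUnder_le_of_le atTop fun i => (hv i).le)
    (Eventually.of_forall hB)
end
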